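/- arXiv:2305.09069 — 2 statements merged into one kernel-verified Lean document; each statement's English description precedes it below -/
import Mathlib

section
/- Strong duality for traffic assignment (Theorem 1, single-network form): let E be a finite edge set, OD a finite set of origin–destination pairs with nonempty finite path sets P_{ij} and incidence coefficients δ_{ep} ∈ {0,1}, and demands d_{ij} ≥ 0. Suppose each σ_e : [0,∞) → ℝ is convex, continuous, and nondecreasing with σ_e(0) = 0, and that σ*_e(t) = sup_{f≥0}(t f − σ_e(f)) is finite for all t in some neighborhood of the relevant range. Then min over x ∈ X(d) of ∑_{e∈E} σ_e(f_e(x)) equals sup over t ∈ ℝ^E_{≥0} of [ ∑_{(i,j)∈OD} d_{ij}·(min_{p∈P_{ij}} ∑_e δ_{ep} t_e) − ∑_{e∈E} σ*_e(t_e) ], where X(d) = {x ∈ ℝ^P_{≥0} : ∑_{p∈P_{ij}} x_p = d_{ij} for all (i,j) ∈ OD} and f_e(x) = ∑_{p∈P} δ_{ep} x_p. -/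
open Finset

lemma sum_sSup_le' {E : Type*} [Fintype E] (S : E → Set ℝ) (hne : ∀ e, (S e).Nonempty)
    (K : ℝ) (h : ∀ g : E → ℝ, (∀ e, g e ∈ S e) → ∑ e, g e ≤ K) :
    ∑ e, sSup (S e) ≤ K := by
  by_contra hlt
  push_neg at hlt
  set n : ℝ := (Fintype.card E : ℝ) + 1 with hn
  have hn0 : 0 < n := by positivity
  set ε : ℝ := (∑ e, sSup (S e) - K) / n with hε
  have hεpos : 0 < ε := div_pos (by linarith) hn0
  have hch : ∀ e, ∃ y ∈ S e, sSup (S e) - ε < y := fun e =>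
    exists_lt_of_lt_csSup (hne e) (by linarith)
  choose g hg hg' using hch
  have h1 : ∑ e, g e ≤ K := h g hg
  have h2 : ∑ e, (sSup (S e) - ε) ≤ ∑ e, g e := sum_le_sum fun e _ => (hg' e).le
  rw [Finset.sum_sub_distrib] at h2
  simp only [Finset.sum_const, Finset.card_univ, nsmul_eq_mul] at h2
  have hcard : (Fintype.card E : ℝ) * ε < n * ε := by
    apply mul_lt_mul_of_pos_right _ hεpos
    rw [hn]
    linarith
  have hne' : n * ε = ∑ e, sSup (S e) - K := by
    rw [hε, mul_div_cancel₀ _ (ne_of_gt hn0)]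
  linarith

/-- Strong duality for traffic assignment (Theorem 1, single-network form): for convex,
continuous, nondecreasing edge potentials `σ_e` with `σ_e(0) = 0` and everywhere-finite
conjugates `σ*_e(t) = sup_{f ≥ 0}(t f − σ_e f)`, the minimum of the Beckmann objective
`∑_e σ_e(f_e(x))` over the feasible set `X(d)` is attained and equals the supremum over
`t ∈ ℝ^E_{≥0}` of the dual objective `∑ d_{ij} T_{ij}(t) − ∑_e σ*_e(t_e)`. -/
theorem traffic_strong_duality
    {E OD P : Type*} [Fintype E] [Fintype OD] [Fintype P] [DecidableEq OD]
    (part : P → OD)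
    (hne : ∀ ij, (Finset.univ.filter fun p => part p = ij).Nonempty)
    (δ : E → P → ℝ) (hδ : ∀ e p, δ e p = 0 ∨ δ e p = 1)
    (d : OD → ℝ) (hd : ∀ ij, 0 ≤ d ij)
    (σ : E → ℝ → ℝ)
    (hconv : ∀ e, ConvexOn ℝ (Set.Ici 0) (σ e))
    (hcont : ∀ e, ContinuousOn (σ e) (Set.Ici 0))
    (hmono : ∀ e, MonotoneOn (σ e) (Set.Ici 0))
    (hzero : ∀ e, σ e 0 = 0)
    (hfin : ∀ e (t : ℝ), BddAbove ((fun f => t * f - σ e f) '' Set.Ici 0)) :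
    IsLeast
      ((fun x : P → ℝ => ∑ e, σ e (∑ p, δ e p * x p)) ''
        {x : P → ℝ | (∀ p, 0 ≤ x p) ∧
          ∀ ij, ∑ p ∈ Finset.univ.filter (fun p => part p = ij), x p = d ij})
      (sSup ((fun t : E → ℝ =>
          (∑ ij, d ij * (Finset.inf' (Finset.univ.filter fun p => part p = ij) (hne ij)
              (fun p => ∑ e, δ e p * t e)))
            - ∑ e, sSup ((fun f => t e * f - σ e f) '' Set.Ici 0)) ''
        {t : E → ℝ | ∀ e, 0 ≤ t e})) := by
  classical
  -- Abbreviations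
  set Feas : Set (P → ℝ) := {x : P → ℝ | (∀ p, 0 ≤ x p) ∧
      ∀ ij, ∑ p ∈ Finset.univ.filter (fun p => part p = ij), x p = d ij} with hFeasDef
  set F : (P → ℝ) → ℝ := (fun x : P → ℝ => ∑ e, σ e (∑ p, δ e p * x p)) with hFdef
  set DF : (E → ℝ) → ℝ := (fun t : E → ℝ =>
          (∑ ij, d ij * (Finset.inf' (Finset.univ.filter fun p => part p = ij) (hne ij)
              (fun p => ∑ e, δ e p * t e)))
            - ∑ e, sSup ((fun f => t e * f - σ e f) '' Set.Ici 0)) with hDFdef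
  have hδ0 : ∀ e p, 0 ≤ δ e p := fun e p => by rcases hδ e p with h | h <;> simp [h]
  -- edge flow
  set Δ : (P → ℝ) → E → ℝ := fun x e => ∑ p, δ e p * x p with hΔdef
  set cost : P → (E → ℝ) → ℝ := fun p t => ∑ e, δ e p * t e with hcostdef
  set T : OD → (E → ℝ) → ℝ := fun ij t =>
    (Finset.univ.filter fun p => part p = ij).inf' (hne ij) (fun p => cost p t) with hTdef
  set conj : E → ℝ → ℝ := fun e s => sSup ((fun f => s * f - σ e f) '' Set.Ici 0) with hconjdef
  have hF : ∀ x, F x = ∑ e, σ e (Δ x e) := fun x => rfl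
  have hDF : ∀ t, DF t = (∑ ij, d ij * T ij t) - ∑ e, conj e (t e) := fun t => rfl
  -- basic conjugate facts
  have hconjmem : ∀ e (s f : ℝ), 0 ≤ f → s * f - σ e f ≤ conj e s := by
    intro e s f hf
    exact le_csSup (hfin e s) ⟨f, hf, rfl⟩
  -- flows of feasible points are nonnegative
  have hflow : ∀ x ∈ Feas, ∀ e, 0 ≤ Δ x e := by
    intro x hx e
    exact Finset.sum_nonneg fun p _ => mul_nonneg (hδ0 e p) (hx.1 p)
  -- swap lemma
  have hswap : ∀ (t : E → ℝ) (x : P → ℝ),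
      ∑ e, t e * Δ x e = ∑ p, x p * cost p t := by
    intro t x
    calc ∑ e, t e * Δ x e = ∑ e, ∑ p, t e * (δ e p * x p) := by
          refine Finset.sum_congr rfl fun e _ => ?_
          rw [hΔdef, Finset.mul_sum]
      _ = ∑ p, ∑ e, t e * (δ e p * x p) := Finset.sum_comm
      _ = ∑ p, x p * cost p t := by
          refine Finset.sum_congr rfl fun p _ => ?_
          rw [hcostdef, Finset.mul_sum]
          exact Finset.sum_congr rfl fun e _ => by ring
  -- assignments concentrated on one path per OD pair
  have hmk : ∀ (q : OD → P), (∀ ij, part (q ij) = ij) →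
      (fun p => if p = q (part p) then d (part p) else 0) ∈ Feas ∧
      ∀ t : E → ℝ, ∑ e, t e * Δ (fun p => if p = q (part p) then d (part p) else 0) e
          = ∑ ij, d ij * cost (q ij) t := by
    intro q hq
    set x : P → ℝ := fun p => if p = q (part p) then d (part p) else 0 with hxdef
    have hgroup : ∀ (ij : OD) (y : P → ℝ),
        ∑ p ∈ Finset.univ.filter (fun p => part p = ij), x p * y p = d ij * y (q ij) := by
      intro ij y
      have : ∀ p ∈ Finset.univ.filter (fun p => part p = ij),
          x p * y p = if p = q ij then d ij * y (q ij) else 0 := by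
        intro p hp
        rw [Finset.mem_filter] at hp
        by_cases hpq : p = q ij
        · subst hpq
          simp [hxdef, hp.2]
        · simp [hxdef, hp.2, hpq]
      rw [Finset.sum_congr rfl this, Finset.sum_ite_eq']
      have : q ij ∈ Finset.univ.filter (fun p => part p = ij) := by
        simp [hq ij]
      simp [this]
    have hxmem : x ∈ Feas := by
      constructor
      · intro p
        rw [hxdef]
        dsimp only
        split_ifs
        · exact hd _
        · exact le_refl 0
      · intro ij
        have := hgroup ij (fun _ => 1)
        simpa using this
    refine ⟨hxmem, ?_⟩
    intro t
    rw [hswap t x, ← Finset.sum_fiberwise Finset.univ part (fun p => x p * cost p t)]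
    exact Finset.sum_congr rfl fun ij _ => hgroup ij (fun p => cost p t)
  -- a feasible point
  have hq0 : ∀ ij : OD, ∃ p, part p = ij := by
    intro ij
    obtain ⟨p, hp⟩ := hne ij
    rw [Finset.mem_filter] at hp
    exact ⟨p, hp.2⟩
  choose q0 hq0' using hq0
  obtain ⟨hx0mem, -⟩ := hmk q0 hq0'
  -- compactness of the feasible set
  have hFeasClosed : IsClosed Feas := by
    rw [hFeasDef]
    have h1 : IsClosed {x : P → ℝ | ∀ p, 0 ≤ x p} := by
      rw [Set.setOf_forall]
      exact isClosed_iInter fun p => isClosed_le continuous_const (continuous_apply p)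
    have h2 : IsClosed {x : P → ℝ | ∀ ij,
        ∑ p ∈ Finset.univ.filter (fun p => part p = ij), x p = d ij} := by
      rw [Set.setOf_forall]
      exact isClosed_iInter fun ij => isClosed_eq
        (continuous_finset_sum _ fun p _ => continuous_apply p) continuous_const
    exact (Set.setOf_and ▸ h1.inter h2 :)
  have hFeasBdd : Feas ⊆ Set.Icc (fun _ => (0:ℝ)) (fun p => d (part p)) := by
    intro x hx
    constructor
    · intro p
      exact hx.1 p
    · intro p
      calc x p ≤ ∑ p' ∈ Finset.univ.filter (fun p' => part p' = part p), x p' := by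
            refine Finset.single_le_sum (fun p' _ => hx.1 p') ?_
            simp
        _ = d (part p) := hx.2 (part p)
  have hFeasCompact : IsCompact Feas :=
    (isCompact_Icc).of_isClosed_subset hFeasClosed hFeasBdd
  -- continuity of F on Feas
  have hFcont : ContinuousOn F Feas := by
    rw [hFdef]
    apply continuousOn_finset_sum
    intro e _
    exact (hcont e).comp
      (continuous_finset_sum _ fun p _ => continuous_const.mul (continuous_apply p)).continuousOn
      (fun x hx => hflow x hx e)
  obtain ⟨xs, hxs, hxsmin'⟩ := hFeasCompact.exists_isMinOn ⟨_, hx0mem⟩ hFcont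
  have hxsmin : ∀ x ∈ Feas, F xs ≤ F x := fun x hx => hxsmin' hx
  set M : ℝ := F xs with hM
  -- weak duality
  have weak : ∀ t : E → ℝ, (∀ e, 0 ≤ t e) → ∀ x ∈ Feas, DF t ≤ F x := by
    intro t ht x hx
    have h1 : ∑ ij, d ij * T ij t ≤ ∑ p, x p * cost p t := by
      rw [← Finset.sum_fiberwise Finset.univ part (fun p => x p * cost p t)]
      refine Finset.sum_le_sum fun ij _ => ?_
      calc d ij * T ij t = ∑ p ∈ Finset.univ.filter (fun p => part p = ij), x p * T ij t := by
            rw [← Finset.sum_mul, hx.2 ij]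
        _ ≤ ∑ p ∈ Finset.univ.filter (fun p => part p = ij), x p * cost p t := by
            refine Finset.sum_le_sum fun p hp => ?_
            exact mul_le_mul_of_nonneg_left (Finset.inf'_le _ hp) (hx.1 p)
    have h2 : ∀ e, t e * Δ x e - conj e (t e) ≤ σ e (Δ x e) := by
      intro e
      have := hconjmem e (t e) (Δ x e) (hflow x hx e)
      linarith
    have h3 : ∑ e, (t e * Δ x e - conj e (t e)) ≤ ∑ e, σ e (Δ x e) :=
      Finset.sum_le_sum fun e _ => h2 e
    rw [Finset.sum_sub_distrib] at h3
    rw [hDF t, hF x]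
    have h4 := hswap t x
    linarith
  -- extended potentials and Beckmann function on all of ℝ^E
  set σb : E → ℝ → ℝ := fun e f => σ e (max f 0) with hσbdef
  have hσb_eq : ∀ e f, 0 ≤ f → σb e f = σ e f := by
    intro e f hf
    rw [hσbdef]
    simp [max_eq_left hf]
  have hσb_cont : ∀ e, Continuous (σb e) :=
    fun e => (hcont e).comp_continuous (continuous_id.max continuous_const)
      (fun f => Set.mem_Ici.mpr (le_max_right _ _))
  have hσb_cvx : ∀ e (a b f₁ f₂ : ℝ), 0 ≤ a → 0 ≤ b → a + b = 1 →
      σb e (a * f₁ + b * f₂) ≤ a * σb e f₁ + b * σb e f₂ := by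
    intro e a b f₁ f₂ ha hb hab
    have hm1 : (0:ℝ) ≤ max f₁ 0 := le_max_right _ _
    have hm2 : (0:ℝ) ≤ max f₂ 0 := le_max_right _ _
    have hmax : max (a * f₁ + b * f₂) 0 ≤ a * max f₁ 0 + b * max f₂ 0 := by
      apply max_le
      · exact add_le_add (mul_le_mul_of_nonneg_left (le_max_left _ _) ha)
          (mul_le_mul_of_nonneg_left (le_max_left _ _) hb)
      · positivity
    have hcomb : (0:ℝ) ≤ a * max f₁ 0 + b * max f₂ 0 := by positivity
    calc σb e (a * f₁ + b * f₂) = σ e (max (a * f₁ + b * f₂) 0) := rfl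
      _ ≤ σ e (a * max f₁ 0 + b * max f₂ 0) :=
          hmono e (Set.mem_Ici.mpr (le_max_right _ _)) hcomb hmax
      _ ≤ a * σ e (max f₁ 0) + b * σ e (max f₂ 0) := by
          have := (hconv e).2 hm1 hm2 ha hb hab
          simpa [smul_eq_mul] using this
      _ = a * σb e f₁ + b * σb e f₂ := rfl
  set G : (E → ℝ) → ℝ := fun f => ∑ e, σb e (f e) with hGdef
  have hGcont : Continuous G := by
    rw [hGdef]
    exact continuous_finset_sum _ fun e _ => (hσb_cont e).comp (continuous_apply e)
  have hGF : ∀ x ∈ Feas, G (Δ x) = F x := by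
    intro x hx
    rw [hGdef, hF x]
    exact Finset.sum_congr rfl fun e _ => hσb_eq e _ (hflow x hx e)
  have hGnonneg_eq : ∀ f : E → ℝ, (∀ e, 0 ≤ f e) → G f = ∑ e, σ e (f e) := by
    intro f hf
    exact Finset.sum_congr rfl fun e _ => hσb_eq e _ (hf e)
  -- the two convex sets to be separated
  set A : Set ((E → ℝ) × ℝ) :=
    {z | ∃ f x, x ∈ Feas ∧ z.1 = f - Δ x ∧ G f < z.2} with hAdef
  set B : Set ((E → ℝ) × ℝ) := {(0 : E → ℝ)} ×ˢ Set.Iio M with hBdef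
  have hΔlin : ∀ (a b : ℝ) (x₁ x₂ : P → ℝ),
      Δ (a • x₁ + b • x₂) = a • Δ x₁ + b • Δ x₂ := by
    intro a b x₁ x₂
    funext e
    show ∑ p, δ e p * (a * x₁ p + b * x₂ p)
        = a * (∑ p, δ e p * x₁ p) + b * (∑ p, δ e p * x₂ p)
    rw [Finset.mul_sum, Finset.mul_sum, ← Finset.sum_add_distrib]
    exact Finset.sum_congr rfl fun p _ => by ring
  have hFeasConvex : Convex ℝ Feas := by
    rintro x₁ hx₁ x₂ hx₂ a b ha hb hab
    constructor
    · intro p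
      simp only [Pi.add_apply, Pi.smul_apply, smul_eq_mul]
      have := hx₁.1 p; have := hx₂.1 p
      positivity
    · intro ij
      simp only [Pi.add_apply, Pi.smul_apply, smul_eq_mul]
      rw [Finset.sum_add_distrib, ← Finset.mul_sum, ← Finset.mul_sum, hx₁.2 ij, hx₂.2 ij,
        ← add_mul, hab, one_mul]
  have hAconv : Convex ℝ A := by
    rintro z₁ ⟨f₁, x₁, hx₁, h11, h12⟩ z₂ ⟨f₂, x₂, hx₂, h21, h22⟩ a b ha hb hab
    refine ⟨a • f₁ + b • f₂, a • x₁ + b • x₂, hFeasConvex hx₁ hx₂ ha hb hab, ?_, ?_⟩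
    · show (a • z₁ + b • z₂).1 = _
      rw [hΔlin]
      simp only [Prod.fst_add, Prod.smul_fst, h11, h21]
      funext e
      simp only [Pi.add_apply, Pi.sub_apply, Pi.smul_apply, smul_eq_mul]
      ring
    · show G _ < (a • z₁ + b • z₂).2
      have hGle : G (a • f₁ + b • f₂) ≤ a * G f₁ + b * G f₂ := by
        rw [hGdef]
        calc ∑ e, σb e ((a • f₁ + b • f₂) e)
            ≤ ∑ e, (a * σb e (f₁ e) + b * σb e (f₂ e)) := by
              refine Finset.sum_le_sum fun e _ => ?_
              have := hσb_cvx e a b (f₁ e) (f₂ e) ha hb hab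
              simpa using this
          _ = a * ∑ e, σb e (f₁ e) + b * ∑ e, σb e (f₂ e) := by
              rw [Finset.sum_add_distrib, Finset.mul_sum, Finset.mul_sum]
      have hstrict : a * G f₁ + b * G f₂ < a * z₁.2 + b * z₂.2 := by
        rcases ha.lt_or_eq with ha' | ha'
        · exact add_lt_add_of_lt_of_le (mul_lt_mul_of_pos_left h12 ha')
            (mul_le_mul_of_nonneg_left h22.le hb)
        · have hb' : 0 < b := by rw [← ha'] at hab; linarith
          exact add_lt_add_of_le_of_lt
            (mul_le_mul_of_nonneg_left h12.le ha) (mul_lt_mul_of_pos_left h22 hb')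
      calc G (a • f₁ + b • f₂) ≤ a * G f₁ + b * G f₂ := hGle
        _ < a * z₁.2 + b * z₂.2 := hstrict
        _ = (a • z₁ + b • z₂).2 := by simp [smul_eq_mul]
  have hAopen : IsOpen A := by
    rw [Metric.isOpen_iff]
    rintro z ⟨f, x, hx, hz1, hz2⟩
    have hcontf : ContinuousAt G f := hGcont.continuousAt
    set h : ℝ := z.2 - G f with hh
    have hhpos : 0 < h := by rw [hh]; linarith
    obtain ⟨dta, hdta, hdta'⟩ := Metric.continuousAt_iff.mp hcontf (h/2) (by linarith)
    refine ⟨min dta (h/2), by positivity, ?_⟩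
    rintro z' hz'
    rw [Metric.mem_ball, Prod.dist_eq] at hz'
    have hd1 : dist z'.1 z.1 < dta := lt_of_le_of_lt (le_max_left _ _)
      (lt_of_lt_of_le hz' (min_le_left _ _))
    have hd2 : dist z'.2 z.2 < h/2 := lt_of_le_of_lt (le_max_right _ _)
      (lt_of_lt_of_le hz' (min_le_right _ _))
    refine ⟨f + (z'.1 - z.1), x, hx, ?_, ?_⟩
    · rw [hz1]; abel
    · have hdist : dist (f + (z'.1 - z.1)) f < dta := by
        rw [dist_eq_norm]
        have : f + (z'.1 - z.1) - f = z'.1 - z.1 := by abel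
        rw [this, ← dist_eq_norm]
        exact hd1
      have h1 := hdta' hdist
      rw [Real.dist_eq, abs_lt] at h1
      have h2 : |z'.2 - z.2| < h/2 := by rw [← Real.dist_eq]; exact hd2
      rw [abs_lt] at h2
      have := hh
      linarith [h1.2, h2.1]
  have hBconv : Convex ℝ B := (convex_singleton _).prod (convex_Iio M)
  have hdisj : Disjoint A B := by
    rw [Set.disjoint_left]
    rintro z ⟨f, x, hx, hz1, hz2⟩ hzB
    rw [hBdef, Set.mem_prod, Set.mem_singleton_iff, Set.mem_Iio] at hzB
    have hfx : f = Δ x := by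
      have : f - Δ x = 0 := by rw [← hz1, hzB.1]
      have := sub_eq_zero.mp this
      exact this
    rw [hfx, hGF x hx] at hz2
    have := hxsmin x hx
    linarith [hzB.2]
  obtain ⟨φ, u, hAu', hBu'⟩ := geometric_hahn_banach_open hAconv hAopen hBconv hdisj
  set b : ℝ := φ ((0 : E → ℝ), (1 : ℝ)) with hbdef
  have hφsplit : ∀ (v : E → ℝ) (r : ℝ), φ (v, r) = φ (v, 0) + r * b := by
    intro v r
    have h1 : ((v, r) : (E → ℝ) × ℝ) = (v, (0:ℝ)) + r • ((0 : E → ℝ), (1:ℝ)) := by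
      rw [Prod.ext_iff]
      constructor
      · simp
      · simp
    rw [h1, map_add, map_smul, smul_eq_mul]
  have hBu : ∀ s : ℝ, s < M → u ≤ s * b := by
    intro s hs
    have hmem : ((0 : E → ℝ), s) ∈ B := by
      rw [hBdef, Set.mem_prod]
      exact ⟨rfl, hs⟩
    have := hBu' _ hmem
    rw [hφsplit] at this
    have h0 : φ ((0 : E → ℝ), (0:ℝ)) = 0 := by
      have : ((0 : E → ℝ), (0:ℝ)) = (0 : (E → ℝ) × ℝ) := rfl
      rw [this, map_zero]
    rw [h0, zero_add] at this
    exact this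
  have hAu : ∀ (f : E → ℝ), ∀ x ∈ Feas, ∀ r : ℝ, G f < r →
      φ (f - Δ x, 0) + r * b < u := by
    intro f x hx r hr
    have hmem : ((f - Δ x, r) : (E → ℝ) × ℝ) ∈ A := ⟨f, x, hx, rfl, hr⟩
    have := hAu' _ hmem
    rw [hφsplit] at this
    exact this
  have hbneg : b < 0 := by
    rcases lt_trichotomy b 0 with h | h | h
    · exact h
    · exfalso
      have key : ∀ v : E → ℝ, φ (v, 0) < u := by
        intro v
        have := hAu (v + Δ xs) xs hxs (G (v + Δ xs) + 1) (by linarith)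
        have h2 : v + Δ xs - Δ xs = v := by abel
        rw [h2, h, mul_zero, add_zero] at this
        exact this
      have hL0 : ∀ v : E → ℝ, φ (v, 0) ≤ 0 := by
        intro v
        by_contra hv
        push_neg at hv
        set c : ℝ := u / φ (v, 0) + 1 with hcdef
        have h1 : (c • v, (0:ℝ)) = c • ((v, (0:ℝ)) : (E → ℝ) × ℝ) := by
          rw [Prod.smul_mk, smul_zero]
        have h2 := key (c • v)
        rw [h1, map_smul, smul_eq_mul] at h2
        have h3 : c * φ (v, 0) = u + φ (v, 0) := by
          rw [hcdef]
          field_simp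
        rw [h3] at h2
        linarith
      have hL : ∀ v : E → ℝ, φ (v, 0) = 0 := by
        intro v
        refine le_antisymm (hL0 v) ?_
        have h1 := hL0 (-v)
        have h2 : ((-v, (0:ℝ)) : (E → ℝ) × ℝ) = -((v, (0:ℝ)) : (E → ℝ) × ℝ) := by
          rw [Prod.neg_mk, neg_zero]
        rw [h2, map_neg] at h1
        linarith
      have h1 : (0:ℝ) < u := by
        have := key 0
        rw [hL 0] at this
        exact this
      have h2 : u ≤ 0 := by
        have := hBu (M - 1) (by linarith)
        rw [h, mul_zero] at this
        exact this
      linarith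
    · exfalso
      set s : ℝ := min (M - 1) ((u - 1) / b) with hsdef
      have hs : s < M := lt_of_le_of_lt (min_le_left _ _) (by linarith)
      have h2 := hBu s hs
      have h3 : s * b ≤ ((u - 1) / b) * b :=
        mul_le_mul_of_nonneg_right (min_le_right _ _) h.le
      rw [div_mul_cancel₀ _ (ne_of_gt h)] at h3
      linarith
  have hu_le : u ≤ b * M := by
    by_contra hc
    push_neg at hc
    have h1 : u / b < M := by
      rw [div_lt_iff_of_neg hbneg]
      linarith
    set s : ℝ := (M + u / b) / 2 with hsdef
    have hs : s < M := by rw [hsdef]; linarith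
    have hs2 : u / b < s := by rw [hsdef]; linarith
    have h2 := hBu s hs
    have h3 : s * b < u := (div_lt_iff_of_neg hbneg).mp hs2
    linarith
  have hbpos : 0 < -b := by linarith
  have key : ∀ (f : E → ℝ) (x : P → ℝ), x ∈ Feas →
      φ (f - Δ x, 0) + G f * b ≤ b * M := by
    intro f x hx
    have hle : φ (f - Δ x, 0) + G f * b ≤ u := by
      by_contra hcon
      push_neg at hcon
      set L : ℝ := φ (f - Δ x, 0) + G f * b with hLdef
      set ε : ℝ := (L - u) / (-b) with hεdef
      have hεpos : 0 < ε := div_pos (by linarith) hbpos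
      have h1 := hAu f x hx (G f + ε) (by linarith)
      have h2 : ε * b = u - L := by
        rw [hεdef]
        field_simp
        rw [mul_div_cancel_right₀ _ (ne_of_lt hbneg)]
        ring
      have h3 : (G f + ε) * b = G f * b + ε * b := by ring
      rw [h3, h2] at h1
      linarith
    linarith
  set t : E → ℝ := fun e => φ ((Pi.single e 1 : E → ℝ), (0:ℝ)) / (-b) with htdef
  have hφsingle : ∀ e, φ ((Pi.single e 1 : E → ℝ), (0:ℝ)) = (-b) * t e := by
    intro e
    rw [htdef]
    have hbne : b ≠ 0 := ne_of_lt hbneg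
    field_simp
  have hφv : ∀ v : E → ℝ, φ (v, 0) = (-b) * ∑ e, t e * v e := by
    intro v
    have h1 : ((v, (0:ℝ)) : (E → ℝ) × ℝ)
        = ∑ e, (v e) • (((Pi.single e 1 : E → ℝ), (0:ℝ)) : (E → ℝ) × ℝ) := by
      rw [Prod.ext_iff]
      constructor
      · rw [Prod.fst_sum]
        simp only [Prod.smul_fst]
        have : ∀ e, (v e) • (Pi.single e 1 : E → ℝ) = Pi.single e (v e) := by
          intro e
          rw [← Pi.single_smul, smul_eq_mul, mul_one]
        rw [Finset.sum_congr rfl fun e _ => this e, Finset.univ_sum_single]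
      · rw [Prod.snd_sum]
        simp
    rw [h1, map_sum]
    rw [Finset.mul_sum]
    refine Finset.sum_congr rfl fun e _ => ?_
    rw [map_smul, smul_eq_mul, hφsingle e]
    ring
  have star : ∀ (f : E → ℝ) (x : P → ℝ), x ∈ Feas →
      ∑ e, t e * f e - G f ≤ ∑ e, t e * Δ x e - M := by
    intro f x hx
    have h1 := key f x hx
    rw [hφv] at h1
    have h2 : ∑ e, t e * (f - Δ x) e = ∑ e, t e * f e - ∑ e, t e * Δ x e := by
      rw [← Finset.sum_sub_distrib]
      refine Finset.sum_congr rfl fun e _ => ?_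
      rw [Pi.sub_apply]
      ring
    rw [h2] at h1
    have h3 : (-b) * (∑ e, t e * f e - G f) ≤ (-b) * (∑ e, t e * Δ x e - M) := by
      nlinarith [h1]
    exact le_of_mul_le_mul_left h3 hbpos
  -- the dual prices are nonnegative
  have ht0 : ∀ e, 0 ≤ t e := by
    intro e0
    by_contra hneg
    push_neg at hneg
    set K : ℝ := ∑ e, t e * Δ xs e - M with hKdef
    set c : ℝ := (|K| + 1) / (-t e0) with hcdef
    have hc : 0 < c := div_pos (by positivity) (by linarith)
    have hstar := star (Pi.single e0 (-c)) xs hxs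
    have hsum : ∑ e, t e * (Pi.single e0 (-c) : E → ℝ) e = t e0 * (-c) := by
      rw [Finset.sum_eq_single e0]
      · rw [Pi.single_eq_same]
      · intro e _ he
        rw [Pi.single_eq_of_ne he, mul_zero]
      · intro h
        exact absurd (Finset.mem_univ e0) h
    have hG0 : G (Pi.single e0 (-c)) = 0 := by
      rw [hGdef]
      refine Finset.sum_eq_zero fun e _ => ?_
      by_cases he : e = e0
      · subst he
        rw [Pi.single_eq_same, hσbdef]
        simp only
        rw [max_eq_right (by linarith : -c ≤ (0:ℝ))]
        exact hzero e
      · rw [Pi.single_eq_of_ne he, hσbdef]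
        simp only
        rw [max_self]
        exact hzero e
    rw [hsum, hG0, sub_zero] at hstar
    have hval : t e0 * (-c) = |K| + 1 := by
      rw [hcdef]
      have : t e0 * (-((|K| + 1) / (-t e0))) = (-t e0) * ((|K| + 1) / (-t e0)) := by ring
      rw [this, mul_div_cancel₀ _ (by linarith : -t e0 ≠ 0)]
    rw [hval] at hstar
    have := le_abs_self K
    linarith
  -- assignment along cheapest paths for t
  have hqmin : ∀ ij : OD, ∃ p ∈ Finset.univ.filter (fun p => part p = ij),
      T ij t = cost p t := by
    intro ij
    obtain ⟨p, hp, hp'⟩ := Finset.exists_mem_eq_inf'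
      (hne ij) (fun p => cost p t)
    exact ⟨p, hp, hp'⟩
  choose q hq1 hq2 using hqmin
  have hqpart : ∀ ij, part (q ij) = ij := by
    intro ij
    have := hq1 ij
    rw [Finset.mem_filter] at this
    exact this.2
  obtain ⟨hxhat, hxhatflow⟩ := hmk q hqpart
  set xhat : P → ℝ := fun p => if p = q (part p) then d (part p) else 0 with hxhatdef
  have hdual_flow : ∑ e, t e * Δ xhat e = ∑ ij, d ij * T ij t := by
    rw [hxhatflow t]
    exact Finset.sum_congr rfl fun ij _ => by rw [hq2 ij]
  -- bound the sum of conjugates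
  have conj_bound : ∑ e, conj e (t e) ≤ (∑ ij, d ij * T ij t) - M := by
    rw [hconjdef]
    refine sum_sSup_le' _ (fun e => Set.Nonempty.image _ Set.nonempty_Ici) _ ?_
    intro g hg
    have hsel : ∀ e, ∃ fe : ℝ, 0 ≤ fe ∧ t e * fe - σ e fe = g e := by
      intro e
      obtain ⟨fe, hfe, hfe'⟩ := hg e
      exact ⟨fe, hfe, hfe'⟩
    choose fe hfe1 hfe2 using hsel
    have hstar := star fe xhat hxhat
    rw [hGnonneg_eq fe hfe1] at hstar
    have h1 : ∑ e, g e = ∑ e, t e * fe e - ∑ e, σ e (fe e) := by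
      rw [← Finset.sum_sub_distrib]
      exact Finset.sum_congr rfl fun e _ => (hfe2 e).symm
    rw [h1, hdual_flow] at *
    linarith [hstar]
  have hDFt : M ≤ DF t := by
    rw [hDF t]
    linarith [conj_bound]
  -- conclusion
  have himg : ∀ y ∈ DF '' {t : E → ℝ | ∀ e, 0 ≤ t e}, y ≤ M := by
    rintro y ⟨t', ht', rfl⟩
    exact weak t' ht' xs hxs
  have hbddAbove : BddAbove (DF '' {t : E → ℝ | ∀ e, 0 ≤ t e}) := ⟨M, himg⟩
  have hmemt : DF t ∈ DF '' {t : E → ℝ | ∀ e, 0 ≤ t e} := ⟨t, ht0, rfl⟩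
  have hsup : sSup (DF '' {t : E → ℝ | ∀ e, 0 ≤ t e}) = M := by
    refine le_antisymm (csSup_le ⟨DF t, hmemt⟩ himg) ?_
    exact le_trans hDFt (le_csSup hbddAbove hmemt)
  rw [hsup]
  exact ⟨⟨xs, hxs, rfl⟩, by rintro y ⟨x, hx, rfl⟩; exact hxsmin x hx⟩
end

section
/- Sufficiency of the Wardrop condition: let E be a finite edge set, OD a finite set of origin–destination pairs with nonempty finite path sets P_{ij} and incidence coefficients δ_{ep} ∈ {0,1}, demands d_{ij} ≥ 0, and for each e let τ_e : [0,∞) → ℝ be continuous and nondecreasing with σ_e(f) = ∫₀^f τ_e(z) dz. Suppose x* ∈ X(d) is such that for every (i,j) ∈ OD and every path p ∈ P_{ij} with x*_p > 0 one has ∑_e δ_{ep} τ_e(f_e(x*)) = min_{q∈P_{ij}} ∑_e δ_{eq} τ_e(f_e(x*)). Then x* minimizes ∑_{e∈E} σ_e(f_e(x)) over X(d). -/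
/-! The Beckmann objective `x ↦ ∑_e σ_e(f_e(x))` is convex, and its linearization at `x*` is the
total path cost `∑_p c_p x_p` with `c_p = ∑_e δ_{ep} τ_e(f_e(x*))`. Concretely, monotonicity of
`τ_e` gives `σ_e(b) - σ_e(a) ≥ τ_e(a) (b - a)`, so the objective grows from `x*` to `x` by at least
`∑_p c_p (x_p - x*_p)`. The Wardrop condition says that `x*` routes every OD demand along paths of
minimal cost, so this difference is nonnegative. -/

open Finset

lemma MonotoneOn.mul_sub_le_intervalIntegral {τ : ℝ → ℝ} {a b : ℝ}
    (hτ : MonotoneOn τ (Set.uIcc a b)) :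
    τ a * (b - a) ≤ ∫ z in a..b, τ z := by
  have hint : IntervalIntegrable τ MeasureTheory.volume a b := hτ.intervalIntegrable
  rcases le_total a b with hab | hba
  · calc τ a * (b - a) = ∫ _ in a..b, τ a := by simp [mul_comm]
      _ ≤ ∫ z in a..b, τ z :=
        intervalIntegral.integral_mono_on hab (by simp) hint fun z hz =>
          hτ Set.left_mem_uIcc (Set.Icc_subset_uIcc hz) hz.1
  · have : ∫ z in b..a, τ z ≤ ∫ _ in b..a, τ a :=
      intervalIntegral.integral_mono_on hba hint.symm (by simp) fun z hz =>
        hτ (Set.Icc_subset_uIcc' hz) Set.left_mem_uIcc hz.2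
    rw [intervalIntegral.integral_symm]
    simp only [intervalIntegral.integral_const, smul_eq_mul] at this
    linarith

lemma MonotoneOn.mul_sub_le_intervalIntegral_sub {τ : ℝ → ℝ} (hτ : MonotoneOn τ (Set.Ici 0))
    {a b : ℝ} (ha : 0 ≤ a) (hb : 0 ≤ b) :
    τ a * (b - a) ≤ (∫ z in (0 : ℝ)..b, τ z) - ∫ z in (0 : ℝ)..a, τ z := by
  have mono_on {c : ℝ} (hc : 0 ≤ c) : MonotoneOn τ (Set.uIcc 0 c) :=
    hτ.mono fun z hz => le_trans (le_min le_rfl hc) hz.1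
  rw [intervalIntegral.integral_interval_sub_left (mono_on hb).intervalIntegrable
    (mono_on ha).intervalIntegrable]
  exact (hτ.mono fun z hz => le_trans (le_min ha hb) hz.1).mul_sub_le_intervalIntegral

lemma sum_mul_sum_mul_eq_sum_sum_mul {E P : Type*} [Fintype E] [Fintype P]
    (δ : E → P → ℝ) (w : E → ℝ) (y : P → ℝ) :
    ∑ e, w e * ∑ p, δ e p * y p = ∑ p, (∑ e, δ e p * w e) * y p := by
  simp_rw [Finset.mul_sum, Finset.sum_mul]
  rw [Finset.sum_comm]
  exact sum_congr rfl fun _ _ => sum_congr rfl fun _ _ => by ring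

lemma Finset.sum_mul_le_sum_mul_of_pos_imp_eq_inf' {ι : Type*} {s : Finset ι} (hs : s.Nonempty)
    {c x y : ι → ℝ} (hx : ∀ i ∈ s, 0 ≤ x i) (hy : ∀ i ∈ s, 0 ≤ y i)
    (hsum : ∑ i ∈ s, y i = ∑ i ∈ s, x i) (hmin : ∀ i ∈ s, 0 < y i → c i = s.inf' hs c) :
    ∑ i ∈ s, c i * y i ≤ ∑ i ∈ s, c i * x i := by
  have hy_eq : ∀ i ∈ s, c i * y i = s.inf' hs c * y i := fun i hi => by
    rcases (hy i hi).lt_or_eq with hpos | hzero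
    · rw [hmin i hi hpos]
    · simp [← hzero]
  calc ∑ i ∈ s, c i * y i = s.inf' hs c * ∑ i ∈ s, x i := by
        rw [sum_congr rfl hy_eq, ← mul_sum, hsum]
    _ ≤ ∑ i ∈ s, c i * x i := by
        rw [mul_sum]
        exact sum_le_sum fun i hi => mul_le_mul_of_nonneg_right (inf'_le c hi) (hx i hi)

lemma sum_mul_le_sum_mul_of_wardrop {P OD : Type*} [Fintype P] [Fintype OD] [DecidableEq OD]
    (part : P → OD) (hne : ∀ ij, (univ.filter fun p => part p = ij).Nonempty)
    {c x y : P → ℝ} (hx : ∀ p, 0 ≤ x p) (hy : ∀ p, 0 ≤ y p)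
    (hsum : ∀ ij, ∑ p ∈ univ.filter (fun p => part p = ij), y p =
      ∑ p ∈ univ.filter (fun p => part p = ij), x p)
    (hmin : ∀ ij, ∀ p, part p = ij → 0 < y p →
      c p = (univ.filter fun q => part q = ij).inf' (hne ij) c) :
    ∑ p, c p * y p ≤ ∑ p, c p * x p := by
  rw [← sum_fiberwise univ part, ← sum_fiberwise univ part]
  refine sum_le_sum fun ij _ => ?_
  exact sum_mul_le_sum_mul_of_pos_imp_eq_inf' (hne ij) (fun p _ => hx p) (fun p _ => hy p)
    (hsum ij) fun p hp => hmin ij p (mem_filter.mp hp).2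

theorem wardrop_implies_beckmann_min_general
    {E OD P : Type*} [Fintype E] [Fintype OD] [Fintype P] [DecidableEq OD]
    (part : P → OD)
    (hne : ∀ ij, (Finset.univ.filter fun p => part p = ij).Nonempty)
    (δ : E → P → ℝ) (hδ : ∀ e p, δ e p = 0 ∨ δ e p = 1)
    (d : OD → ℝ)
    (τ : E → ℝ → ℝ)
    (hτmono : ∀ e, MonotoneOn (τ e) (Set.Ici 0))
    (σ : E → ℝ → ℝ) (hσ : ∀ e f, σ e f = ∫ z in (0:ℝ)..f, τ e z)
    (xstar : P → ℝ) (hxstar : ∀ p, 0 ≤ xstar p)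
    (hxstard : ∀ ij, ∑ p ∈ Finset.univ.filter (fun p => part p = ij), xstar p = d ij)
    (hwardrop : ∀ ij, ∀ p, part p = ij → 0 < xstar p →
      ∑ e, δ e p * τ e (∑ q, δ e q * xstar q) =
        Finset.inf' (Finset.univ.filter fun q => part q = ij) (hne ij)
          (fun q => ∑ e, δ e q * τ e (∑ q', δ e q' * xstar q'))) :
    ∀ x : P → ℝ, (∀ p, 0 ≤ x p) →
      (∀ ij, ∑ p ∈ Finset.univ.filter (fun p => part p = ij), x p = d ij) →
      ∑ e, σ e (∑ p, δ e p * xstar p) ≤ ∑ e, σ e (∑ p, δ e p * x p) := by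
  intro x hx hxd
  have flow_nonneg {y : P → ℝ} (hy : ∀ p, 0 ≤ y p) (e : E) : 0 ≤ ∑ p, δ e p * y p :=
    sum_nonneg fun p _ => mul_nonneg ((hδ e p).elim (·.ge) (·.ge.trans' zero_le_one)) (hy p)
  set w : E → ℝ := fun e => τ e (∑ q, δ e q * xstar q)
  have hcost : ∑ p, (∑ e, δ e p * w e) * xstar p ≤ ∑ p, (∑ e, δ e p * w e) * x p :=
    sum_mul_le_sum_mul_of_wardrop part hne hx hxstar (fun ij => (hxstard ij).trans (hxd ij).symm)
      hwardrop
  have hconvex : ∑ e, w e * ((∑ p, δ e p * x p) - ∑ p, δ e p * xstar p) ≤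
      ∑ e, (σ e (∑ p, δ e p * x p) - σ e (∑ p, δ e p * xstar p)) :=
    sum_le_sum fun e _ => by
      rw [hσ, hσ]
      exact (hτmono e).mul_sub_le_intervalIntegral_sub (flow_nonneg hxstar e) (flow_nonneg hx e)
  simp_rw [mul_sub] at hconvex
  rw [sum_sub_distrib, sum_sub_distrib, sum_mul_sum_mul_eq_sum_sum_mul,
    sum_mul_sum_mul_eq_sum_sum_mul] at hconvex
  linarith

/-- Sufficiency of the Wardrop condition: if `x*` is feasible and every used path has
minimal cost among the paths of its OD pair (at the edge costs `τ_e(f_e(x*))`), then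
`x*` minimizes the Beckmann objective `∑_e σ_e(f_e(x))`, `σ_e(f) = ∫₀^f τ_e(z) dz`,
over the feasible set `X(d)`. -/
theorem wardrop_implies_beckmann_min
    {E OD P : Type*} [Fintype E] [Fintype OD] [Fintype P] [DecidableEq OD]
    (part : P → OD)
    (hne : ∀ ij, (Finset.univ.filter fun p => part p = ij).Nonempty)
    (δ : E → P → ℝ) (hδ : ∀ e p, δ e p = 0 ∨ δ e p = 1)
    (d : OD → ℝ) (hd : ∀ ij, 0 ≤ d ij)
    (τ : E → ℝ → ℝ)
    (hτcont : ∀ e, ContinuousOn (τ e) (Set.Ici 0))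
    (hτmono : ∀ e, MonotoneOn (τ e) (Set.Ici 0))
    (σ : E → ℝ → ℝ) (hσ : ∀ e f, σ e f = ∫ z in (0:ℝ)..f, τ e z)
    (xstar : P → ℝ) (hxstar : ∀ p, 0 ≤ xstar p)
    (hxstard : ∀ ij, ∑ p ∈ Finset.univ.filter (fun p => part p = ij), xstar p = d ij)
    (hwardrop : ∀ ij, ∀ p, part p = ij → 0 < xstar p →
      ∑ e, δ e p * τ e (∑ q, δ e q * xstar q) =
        Finset.inf' (Finset.univ.filter fun q => part q = ij) (hne ij)
          (fun q => ∑ e, δ e q * τ e (∑ q', δ e q' * xstar q'))) :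
    ∀ x : P → ℝ, (∀ p, 0 ≤ x p) →
      (∀ ij, ∑ p ∈ Finset.univ.filter (fun p => part p = ij), x p = d ij) →
      ∑ e, σ e (∑ p, δ e p * xstar p) ≤ ∑ e, σ e (∑ p, δ e p * x p) :=
  wardrop_implies_beckmann_min_general part hne δ hδ d τ hτmono σ hσ xstar hxstar hxstard hwardrop
end
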